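/- arXiv:2501.15465 — 2 statements merged into one kernel-verified Lean document; each statement's English description precedes it below -/
import Mathlib

section
/- For every F₂-linear subspace S of F₂^{2n}, the image under φ of the symplectic dual of S equals the trace dual of the image: φ(S^{⊥s}) = φ(S)^{⊥t}. Consequently, S is totally isotropic (S ⊆ S^{⊥s}) if and only if the additive code φ(S) is trace self-orthogonal (φ(S) ⊆ φ(S)^{⊥t}). -/
noncomputable section

abbrev F2 : Type := ZMod 2
abbrev F4 : Type := GaloisField 2 2
/-- `F₂^{2n}`, with elements written `(a | b)` for `a b : Fin n → F2`. -/
abbrev V2 (n : ℕ) : Type := (Fin n → F2) × (Fin n → F2)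

/-- The symplectic inner product `((a|b), (a'|b'))ₛ = a·b'ᵀ + b·a'ᵀ` on `F₂^{2n}`,
as an `F₂`-bilinear form. -/
def sympBilin (n : ℕ) : LinearMap.BilinForm F2 (V2 n) :=
  LinearMap.mk₂ F2 (fun u v => ∑ i, (u.1 i * v.2 i + u.2 i * v.1 i))
    (by
      intro m₁ m₂ n
      simp only [Prod.fst_add, Prod.snd_add, Pi.add_apply]
      rw [← Finset.sum_add_distrib]
      exact Finset.sum_congr rfl (by intros; ring))
    (by
      intro c m n
      simp only [Prod.smul_fst, Prod.smul_snd, Pi.smul_apply, smul_eq_mul, Finset.mul_sum]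
      exact Finset.sum_congr rfl (by intros; ring))
    (by
      intro m n₁ n₂
      simp only [Prod.fst_add, Prod.snd_add, Pi.add_apply]
      rw [← Finset.sum_add_distrib]
      exact Finset.sum_congr rfl (by intros; ring))
    (by
      intro c m n
      simp only [Prod.smul_fst, Prod.smul_snd, Pi.smul_apply, smul_eq_mul, Finset.mul_sum]
      exact Finset.sum_congr rfl (by intros; ring))

/-- The symplectic dual `V^{⊥s} = {w | ∀ v ∈ V, (v, w)ₛ = 0}` of a subspace `V ⊆ F₂^{2n}`. -/
def sympDual (n : ℕ) (V : Submodule F2 (V2 n)) : Submodule F2 (V2 n) :=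
  (sympBilin n).orthogonal V

/-- The trace inner product `(u, v)ₜ = Σⱼ (uⱼ vⱼ² + uⱼ² vⱼ)` on `F₄ⁿ`. -/
def trInner {n : ℕ} (u v : Fin n → F4) : F4 :=
  ∑ j, (u j * (v j) ^ 2 + (u j) ^ 2 * v j)

/-- The trace dual `C^{⊥t} = {u ∈ F₄ⁿ | ∀ v ∈ C, (u, v)ₜ = 0}` of a set `C ⊆ F₄ⁿ`,
as an `F₂`-subspace of `F₄ⁿ`. -/
def trDualSub {n : ℕ} (C : Set (Fin n → F4)) : Submodule F2 (Fin n → F4) where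
  carrier := {u | ∀ v ∈ C, trInner u v = 0}
  zero_mem' := by intro v hv; simp [trInner]
  add_mem' := by
    intro a b ha hb v hv
    have h : trInner (a + b) v = trInner a v + trInner b v := by
      simp only [trInner, Pi.add_apply]
      rw [← Finset.sum_add_distrib]
      refine Finset.sum_congr rfl ?_
      intro j _
      have h2 : (2 : F4) = 0 := CharTwo.two_eq_zero
      linear_combination (a j * b j * v j) * h2
    rw [h, ha v hv, hb v hv, add_zero]
  smul_mem' := by
    intro c a ha v hv
    have hc : (algebraMap F2 F4 c) ^ 2 = algebraMap F2 F4 c := by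
      have h2 : c ^ 2 = c := by revert c; decide
      rw [← map_pow, h2]
    have h : trInner (c • a) v = algebraMap F2 F4 c * trInner a v := by
      simp only [trInner, Pi.smul_apply, Algebra.smul_def, Finset.mul_sum]
      refine Finset.sum_congr rfl ?_
      intro j _
      rw [mul_pow, hc]; ring
    rw [h, ha v hv, mul_zero]

/-- The isometry `φ((a|b)) = ω a + ω² b` from `F₂^{2n}` to `F₄ⁿ`. -/
def phi {n : ℕ} (ω : F4) (u : V2 n) : Fin n → F4 :=
  fun i => ω * algebraMap F2 F4 (u.1 i) + ω ^ 2 * algebraMap F2 F4 (u.2 i)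

/-! Coordinatewise, squaring acts on `φ(a|b) = ω a + ω² b` as the conjugation of `F₄`,
swapping `a` and `b`. Expanding `x ȳ + x̄ y` with `ω³ = 1` and `ω + ω² = 1` then gives
`(φ u, φ v)ₜ = (u, v)ₛ`. Since `(a, b) ↦ ω a + ω² b` is a bijection `F₂² → F₄`, `φ` is a
bijection carrying the symplectic form to the trace form, so it maps symplectic duals onto
trace duals, and injectivity turns `S ⊆ S^{⊥s}` into `φ(S) ⊆ φ(S^{⊥s})`. -/

section Coordinate

variable {K : Type*} [CommRing K] [CharP K 2] {ω : K}

lemma omega_mul_add_sq_mul_sq (hω : ω ^ 2 + ω + 1 = 0) {a b : K} (ha : a ^ 2 = a)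
    (hb : b ^ 2 = b) : (ω * a + ω ^ 2 * b) ^ 2 = ω * b + ω ^ 2 * a := by
  linear_combination ω ^ 2 * ha + ω ^ 4 * hb + ω * b * (ω - 1) * hω +
    ω ^ 3 * a * b * CharTwo.two_eq_zero (R := K)

lemma omega_trace_form (hω : ω ^ 2 + ω + 1 = 0) {a b c d : K} (ha : a ^ 2 = a)
    (hb : b ^ 2 = b) (hc : c ^ 2 = c) (hd : d ^ 2 = d) :
    (ω * a + ω ^ 2 * b) * (ω * c + ω ^ 2 * d) ^ 2 +
      (ω * a + ω ^ 2 * b) ^ 2 * (ω * c + ω ^ 2 * d) = a * d + b * c := by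
  rw [omega_mul_add_sq_mul_sq hω ha hb, omega_mul_add_sq_mul_sq hω hc hd]
  linear_combination
    (ω ^ 3 * (a * c + b * d) - (a * d + b * c)) * CharTwo.two_eq_zero (R := K) +
      (a * d + b * c) * (ω ^ 2 - ω + 1) * hω

end Coordinate

def omegaCoord (ω : F4) (p : F2 × F2) : F4 :=
  ω * algebraMap F2 F4 p.1 + ω ^ 2 * algebraMap F2 F4 p.2

lemma algebraMap_F2_sq (a : F2) : algebraMap F2 F4 a ^ 2 = algebraMap F2 F4 a := by
  rw [← map_pow, ZMod.pow_card]

lemma omegaCoord_sub (ω : F4) (p q : F2 × F2) :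
    omegaCoord ω (p - q) = omegaCoord ω p - omegaCoord ω q := by
  simp only [omegaCoord, Prod.fst_sub, Prod.snd_sub, map_sub]
  ring

lemma omegaCoord_eq_zero {ω : F4} (hω : ω ^ 2 + ω + 1 = 0) {p : F2 × F2}
    (hp : omegaCoord ω p = 0) : p = 0 := by
  obtain ⟨a, b⟩ := p
  have hF2 : ∀ x : F2, x = 0 ∨ x = 1 := by decide
  rcases hF2 a with rfl | rfl <;> rcases hF2 b with rfl | rfl
  · rfl
  all_goals
    simp only [omegaCoord, map_zero, map_one, mul_zero, mul_one, add_zero, zero_add] at hp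
    refine absurd ?_ (one_ne_zero (α := F4))
  · linear_combination hp - (ω - 1) * (hω - hp)
  · linear_combination hω - (ω + 1) * hp
  · linear_combination hω - hp

lemma omegaCoord_bijective {ω : F4} (hω : ω ^ 2 + ω + 1 = 0) :
    Function.Bijective (omegaCoord ω) := by
  refine (Nat.bijective_iff_injective_and_card _).mpr ⟨fun p q hpq => ?_, ?_⟩
  · exact sub_eq_zero.mp (omegaCoord_eq_zero hω (by rw [omegaCoord_sub, hpq, sub_self]))
  · rw [Nat.card_prod, Nat.card_zmod, GaloisField.card 2 2 two_ne_zero]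
    norm_num

lemma phi_eq_comp (n : ℕ) (ω : F4) :
    phi (n := n) ω =
      Pi.map (fun _ => omegaCoord ω) ∘ (Equiv.arrowProdEquivProdArrow _ _ _).symm :=
  rfl

lemma phi_bijective (n : ℕ) {ω : F4} (hω : ω ^ 2 + ω + 1 = 0) :
    Function.Bijective (phi (n := n) ω) := by
  rw [phi_eq_comp]
  exact (Function.Bijective.piMap fun _ => omegaCoord_bijective hω).comp (Equiv.bijective _)

lemma sympBilin_comm {n : ℕ} (u v : V2 n) : sympBilin n u v = sympBilin n v u := by
  simp only [sympBilin, LinearMap.mk₂_apply]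
  exact Finset.sum_congr rfl fun _ _ => by ring

lemma trInner_phi {n : ℕ} {ω : F4} (hω : ω ^ 2 + ω + 1 = 0) (u v : V2 n) :
    trInner (phi ω u) (phi ω v) = algebraMap F2 F4 (sympBilin n u v) := by
  simp only [trInner, phi, sympBilin, LinearMap.mk₂_apply, map_sum, map_add, map_mul]
  exact Finset.sum_congr rfl fun _ _ => omega_trace_form hω (algebraMap_F2_sq _)
    (algebraMap_F2_sq _) (algebraMap_F2_sq _) (algebraMap_F2_sq _)

lemma trInner_phi_eq_zero_iff {n : ℕ} {ω : F4} (hω : ω ^ 2 + ω + 1 = 0) (u v : V2 n) :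
    trInner (phi ω u) (phi ω v) = 0 ↔ sympBilin n v u = 0 := by
  rw [trInner_phi hω, sympBilin_comm, map_eq_zero_iff _ (algebraMap F2 F4).injective]

lemma phi_image_sympDual {n : ℕ} {ω : F4} (hω : ω ^ 2 + ω + 1 = 0) (S : Submodule F2 (V2 n)) :
    phi ω '' (sympDual n S : Set (V2 n)) =
      (trDualSub (phi ω '' (S : Set (V2 n))) : Set (Fin n → F4)) := by
  ext x
  obtain ⟨u, rfl⟩ := (phi_bijective n hω).2 x
  rw [(phi_bijective n hω).1.mem_set_image]
  change (∀ w ∈ S, sympBilin n w u = 0) ↔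
    ∀ v ∈ phi ω '' (S : Set (V2 n)), trInner (phi ω u) v = 0
  simp only [Set.forall_mem_image, trInner_phi_eq_zero_iff hω, SetLike.mem_coe]

/-- for every `F₂`-subspace `S ⊆ F₂^{2n}`, `φ(S^{⊥s}) = φ(S)^{⊥t}`;
consequently `S` is totally isotropic iff `φ(S)` is trace self-orthogonal. -/
theorem stmt4 (n : ℕ) (ω : F4) (hω : ω ^ 2 + ω + 1 = 0) (S : Submodule F2 (V2 n)) :
    phi ω '' (sympDual n S : Set (V2 n)) =
      (trDualSub (phi ω '' (S : Set (V2 n))) : Set (Fin n → F4)) ∧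
    (S ≤ sympDual n S ↔
      phi ω '' (S : Set (V2 n)) ⊆ (trDualSub (phi ω '' (S : Set (V2 n))) : Set (Fin n → F4))) := by
  rw [← phi_image_sympDual hω, Set.image_subset_image_iff (phi_bijective n hω).1,
    SetLike.coe_subset_coe]
  exact ⟨rfl, Iff.rfl⟩
end
end

section
/- Let s ≥ 1, m ≥ 0, and n = 8s + 4 + 2m ≥ 12. Define vectors in F₄ⁿ: for i = 1,…,2s+1 let rᵢ have entry 1 in coordinates 4(i−1)+1,…,4i and 0 elsewhere, and let r_{2s+2} consist of the block D = (0,1,ω,ω²) repeated 2s+1 times followed by 2m entries equal to 1. Let C be the F₄-span of r₁,…,r_{2s+2}. Then: (i) dim_{F₄} C = 2s+2 and the minimum Hamming weight of C is 4; (ii) the trace radical R = C ∩ C^{⊥t} equals the F₄-span of r₁,…,r_{2s+1}, so dim_{F₂} R = 4s+2; and (iii) every element of C \ R (there are 3·4^{2s+1} of them) has Hamming weight exactly n − 2s − 1. (Hence C normalizes an [[n, 1, n−2s−1; n−4s−3]] EAQECC saturating the EA-Singleton bound.) -/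
/-!
Write a codeword as `a₁ r₁ + ⋯ + a_N r_N + b r_{N+1}` with `N = 2s + 1`. On block `i` it reads
`aᵢ + b x` as `x` runs once through `F₄ = {0, 1, ω, ω²}`, and on the `2m` tail coordinates it is
constant `b`. So if `b ≠ 0` every block has exactly one zero and the weight is `3N + 2m = n - N`,
while if `b = 0` the weight is `4 · #{i | aᵢ ≠ 0}`. Summing the trace form block by block gives
`(u, v)ₜ = (N + 2m)(b b'² + b² b') = b b'² + b² b'`, which vanishes for all `b'` only when `b = 0`;
hence the radical is `{b = 0}`, of `F₄`-dimension `N`, and the counts follow from the linear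
independence of the rows.
-/

noncomputable section

/-- The Hamming weight of `u ∈ F₄ⁿ`: the number of nonzero coordinates. -/
def wt {n : ℕ} (u : Fin n → F4) : ℕ := Set.ncard {i | u i ≠ 0}

open Finset

attribute [local instance] Classical.propDecidable

local instance : Fintype F4 := Fintype.ofFinite F4

lemma card_F4 : Fintype.card F4 = 4 := by
  rw [← Nat.card_eq_fintype_card, GaloisField.card 2 2 (by norm_num)]
  norm_num

lemma F4.sum_pow_three : ∑ x : F4, x ^ 3 = 1 := by
  have h2 : (2 : F4) = 0 := CharTwo.two_eq_zero
  have hq : Fintype.card F4 - 1 = 3 := by rw [card_F4]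
  have hpow (x : F4) : x ^ 3 = if x = 0 then 0 else 1 := by
    split_ifs with hx
    · simp [hx]
    · rw [← hq]
      exact FiniteField.pow_card_sub_one_eq_one x hx
  simp only [hpow, sum_ite, sum_const_zero, zero_add, sum_const, nsmul_one]
  rw [filter_ne', card_erase_of_mem (mem_univ _), card_univ, hq]
  push_cast
  linear_combination h2

/-- Only the cubic term survives, since `∑ x, x ^ k = 0` on `F₄` for `k < 3`. -/
lemma F4.sum_affine_trace (p q b b' : F4) :
    ∑ x : F4, ((p + b * x) * (q + b' * x) ^ 2 + (p + b * x) ^ 2 * (q + b' * x)) =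
      b * b' ^ 2 + b ^ 2 * b' := by
  have h2 : (2 : F4) = 0 := CharTwo.two_eq_zero
  have hsum : ∀ k < 3, ∑ x : F4, x ^ k = 0 := fun k hk =>
    FiniteField.sum_pow_lt_card_sub_one F4 k (by rw [card_F4]; omega)
  have hexp (x : F4) : (p + b * x) * (q + b' * x) ^ 2 + (p + b * x) ^ 2 * (q + b' * x) =
      (p * q ^ 2 + p ^ 2 * q) * x ^ 0 + (b * q ^ 2 + p ^ 2 * b') * x ^ 1 +
        (p * b' ^ 2 + b ^ 2 * q) * x ^ 2 + (b * b' ^ 2 + b ^ 2 * b') * x ^ 3 := by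
    linear_combination x * (p * q * b' + q * b * b' * x + p * q * b + p * b * b' * x) * h2
  simp only [hexp, sum_add_distrib, ← mul_sum, hsum 0 (by norm_num), hsum 1 (by norm_num),
    hsum 2 (by norm_num), F4.sum_pow_three]
  ring

lemma card_filter_affine_ne_zero {K : Type*} [Field K] [Fintype K] [DecidableEq K] (p b : K)
    (hb : b ≠ 0) : #{x | p + b * x ≠ 0} = Fintype.card K - 1 := by
  have hroot : ({x | p + b * x ≠ 0} : Finset K) = univ.erase (-p / b) := by
    ext x
    simp only [mem_filter, mem_erase, mem_univ, true_and, and_true, ne_eq, eq_div_iff hb]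
    exact not_congr ⟨fun h => by linear_combination h, fun h => by linear_combination h⟩
  rw [hroot, card_erase_of_mem (mem_univ _), card_univ]

def blockD (ω : F4) (k : ℕ) : F4 :=
  if k = 0 then 0 else if k = 1 then 1 else if k = 2 then ω else ω ^ 2

lemma blockD_bijective {ω : F4} (hω : ω ^ 2 + ω + 1 = 0) :
    Function.Bijective fun k : Fin 4 => blockD ω k := by
  have h2 : (2 : F4) = 0 := CharTwo.two_eq_zero
  have h01 : (0 : F4) ≠ 1 := zero_ne_one
  have hω0 : ω ≠ 0 := by rintro rfl; simp at hω
  have hω1 : ω ≠ 1 := by rintro rfl; exact h01 (by linear_combination h2 - hω)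
  have hω20 : ω ^ 2 ≠ 0 := pow_ne_zero 2 hω0
  have hω21 : ω ^ 2 ≠ 1 := fun h => hω0 (by linear_combination hω - h - h2)
  have hω2ω : ω ^ 2 ≠ ω := fun h => h01 (by linear_combination h - hω + ω * h2)
  rw [Fintype.bijective_iff_injective_and_card, card_F4, Fintype.card_fin]
  refine ⟨fun k k' h => ?_, rfl⟩
  fin_cases k <;> fin_cases k' <;>
    simp_all [blockD, h01.symm, hω0.symm, hω1.symm, hω20.symm, hω21.symm, hω2ω.symm]

lemma natCard_span_of_linearIndependent {K V ι : Type*} [Field K] [AddCommGroup V] [Module K V]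
    [Fintype ι] {v : ι → V} (hv : LinearIndependent K v) :
    Nat.card (Submodule.span K (Set.range v)) = Nat.card K ^ Fintype.card ι := by
  have := Module.Finite.span_of_finite K (Set.finite_range v)
  rw [Module.natCard_eq_pow_finrank (K := K), finrank_span_eq_card hv]

def traceRadical {n : ℕ} (C : Submodule F4 (Fin n → F4)) : Submodule F2 (Fin n → F4) :=
  C.restrictScalars F2 ⊓ trDualSub C

lemma wt_eq_card {n : ℕ} (u : Fin n → F4) : wt u = #{i | u i ≠ 0} := by
  rw [wt, ← Set.ncard_coe_finset, coe_filter]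
  simp only [mem_univ, true_and]

section Code

variable {N t : ℕ} {ω : F4}

def blockRow (i : Fin N) : Fin (4 * N + t) → F4 := fun j => if (j : ℕ) / 4 = i then 1 else 0

def lastRow (ω : F4) : Fin (4 * N + t) → F4 :=
  fun j => if (j : ℕ) < 4 * N then blockD ω (j % 4) else 1

def codeRows (ω : F4) : Fin (N + 1) → Fin (4 * N + t) → F4 :=
  Fin.snoc (α := fun _ => Fin (4 * N + t) → F4) blockRow (lastRow ω)

def blockCode (ω : F4) : Submodule F4 (Fin (4 * N + t) → F4) :=
  Submodule.span F4 (Set.range (codeRows ω))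

def word (ω : F4) (a : Fin N → F4) (b : F4) : Fin (4 * N + t) → F4 :=
  ∑ i, a i • blockRow i + b • lastRow ω

lemma sum_smul_codeRows (c : Fin (N + 1) → F4) :
    ∑ i, c i • codeRows (t := t) ω i = word ω (fun i => c i.castSucc) (c (Fin.last N)) := by
  simp [Fin.sum_univ_castSucc, codeRows, word]

lemma mem_blockCode {v : Fin (4 * N + t) → F4} : v ∈ blockCode ω ↔ ∃ a b, word ω a b = v := by
  rw [blockCode, Submodule.mem_span_range_iff_exists_fun]
  constructor
  · rintro ⟨c, rfl⟩
    exact ⟨_, _, (sum_smul_codeRows c).symm⟩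
  · rintro ⟨a, b, rfl⟩
    exact ⟨Fin.snoc a b, by simp [sum_smul_codeRows]⟩

lemma image_codeRows_lt :
    codeRows (N := N) (t := t) ω '' {i | (i : ℕ) < N} = Set.range blockRow := by
  rw [← Fin.range_castSucc, ← Set.range_comp]
  congr
  funext i
  simp [codeRows]

lemma mem_span_image_codeRows_lt {v : Fin (4 * N + t) → F4} :
    v ∈ Submodule.span F4 (codeRows ω '' {i | (i : ℕ) < N}) ↔ ∃ a, word ω a 0 = v := by
  simp [image_codeRows_lt, Submodule.mem_span_range_iff_exists_fun, word]

/-- Coordinate `k + 4 i` is labelled `(i, D k)` and coordinate `4 N + l` is labelled `l`. -/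
def blockCoords (hω : ω ^ 2 + ω + 1 = 0) : (Fin N × F4) ⊕ Fin t ≃ Fin (4 * N + t) :=
  (Equiv.sumCongr ((Equiv.refl _).prodCongr (Equiv.ofBijective _ (blockD_bijective hω)).symm)
    (Equiv.refl _)).trans <|
    (Equiv.sumCongr finProdFinEquiv (Equiv.refl _)).trans <|
      finSumFinEquiv.trans (finCongr (by ring))

variable (hω : ω ^ 2 + ω + 1 = 0)
include hω

lemma word_blockCoords_inl (a : Fin N → F4) (b : F4) (i : Fin N) (x : F4) :
    word ω a b (blockCoords (t := t) hω (.inl (i, x))) = a i + b * x := by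
  set k := (Equiv.ofBijective _ (blockD_bijective hω)).symm x
  have hk : blockD ω k = x := (Equiv.ofBijective _ (blockD_bijective hω)).apply_symm_apply x
  have hj : ((blockCoords (t := t) hω (.inl (i, x)) : Fin (4 * N + t)) : ℕ) = k + 4 * i := by
    simp [blockCoords, k]
  have hdiv : ((k : ℕ) + 4 * i) / 4 = i := by omega
  have hmod : ((k : ℕ) + 4 * i) % 4 = k := by omega
  have hlt : (k : ℕ) + 4 * i < 4 * N := by omega
  simp only [word, Pi.add_apply, Finset.sum_apply, Pi.smul_apply, smul_eq_mul, blockRow, lastRow,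
    hj, hdiv, hmod, if_pos hlt, hk, mul_ite, mul_one, mul_zero, Fin.val_inj, sum_ite_eq, mem_univ,
    if_true]

lemma word_blockCoords_inr (a : Fin N → F4) (b : F4) (l : Fin t) :
    word ω a b (blockCoords hω (.inr l)) = b := by
  have hj : ((blockCoords hω (.inr l) : Fin (4 * N + t)) : ℕ) = 4 * N + l := by
    simp [blockCoords]
  have hblock (i : Fin N) : (4 * N + (l : ℕ)) / 4 ≠ i := by omega
  simp only [word, Pi.add_apply, Finset.sum_apply, Pi.smul_apply, smul_eq_mul, blockRow, lastRow,
    hj, if_neg (show ¬ 4 * N + (l : ℕ) < 4 * N by omega), hblock, if_false, mul_zero,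
    sum_const_zero, zero_add, mul_one]

lemma sum_blockCoords {M : Type*} [AddCommMonoid M] (F : Fin (4 * N + t) → M) :
    ∑ j, F j = ∑ i, ∑ x, F (blockCoords hω (.inl (i, x))) + ∑ l, F (blockCoords hω (.inr l)) := by
  rw [← (blockCoords hω).sum_comp, Fintype.sum_sum_type, Fintype.sum_prod_type]

lemma wt_word (a : Fin N → F4) (b : F4) :
    wt (word (t := t) ω a b) = ∑ i, #{x | a i + b * x ≠ 0} + t * if b ≠ 0 then 1 else 0 := by
  simp only [wt_eq_card, card_filter, sum_blockCoords hω, word_blockCoords_inl hω,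
    word_blockCoords_inr hω, sum_const, card_univ, Fintype.card_fin, smul_eq_mul]

lemma wt_word_of_ne_zero (a : Fin N → F4) {b : F4} (hb : b ≠ 0) :
    wt (word (t := t) ω a b) = 3 * N + t := by
  simp only [wt_word hω, card_filter_affine_ne_zero _ _ hb, card_F4, sum_const, card_univ,
    Fintype.card_fin, smul_eq_mul, if_pos hb]
  ring

lemma wt_word_zero (a : Fin N → F4) : wt (word (t := t) ω a 0) = 4 * #{i | a i ≠ 0} := by
  simp only [wt_word hω, zero_mul, add_zero, ne_eq, not_true_eq_false, if_false, mul_zero,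
    card_filter, mul_sum]
  refine sum_congr rfl fun i _ => ?_
  split_ifs <;> simp [*, card_F4]

lemma trInner_word (a a' : Fin N → F4) (b b' : F4) :
    trInner (word (t := t) ω a b) (word ω a' b') =
      ((N + t : ℕ) : F4) * (b * b' ^ 2 + b ^ 2 * b') := by
  simp only [trInner, sum_blockCoords hω, word_blockCoords_inl hω, word_blockCoords_inr hω,
    F4.sum_affine_trace, sum_const, card_univ, Fintype.card_fin, nsmul_eq_mul]
  push_cast
  ring

lemma four_le_wt_of_mem_blockCode (h4 : 4 ≤ 3 * N + t) {v : Fin (4 * N + t) → F4}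
    (hv : v ∈ blockCode ω) (hv0 : v ≠ 0) : 4 ≤ wt v := by
  obtain ⟨a, b, rfl⟩ := mem_blockCode.1 hv
  by_cases hb : b = 0
  · subst hb
    obtain ⟨i, hi⟩ := Function.ne_iff.1 fun ha : a = 0 => hv0 (by simp [ha, word])
    have hpos : 0 < #{i | a i ≠ 0} := card_pos.2 ⟨i, by simpa using hi⟩
    rw [wt_word_zero hω]
    omega
  · rw [wt_word_of_ne_zero hω a hb]
    exact h4

section Radical

variable (hodd : Odd (N + t))
include hodd

lemma word_mem_trDualSub_blockCode_iff {a : Fin N → F4} {b : F4} :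
    word ω a b ∈ trDualSub (blockCode (N := N) (t := t) ω : Set (Fin (4 * N + t) → F4)) ↔
      b = 0 := by
  have h2 : (2 : F4) = 0 := CharTwo.two_eq_zero
  have hcast : ((N + t : ℕ) : F4) = 1 := by
    rw [CharTwo.natCast_eq_mod, Nat.odd_iff.mp hodd, Nat.cast_one]
  constructor
  · intro h
    have h1 := h (word ω 0 1) (mem_blockCode.2 ⟨0, 1, rfl⟩)
    have hω' := h (word ω 0 ω) (mem_blockCode.2 ⟨0, ω, rfl⟩)
    rw [trInner_word hω, hcast] at h1 hω'
    linear_combination b * hω - hω' - ω * h1 + b ^ 2 * ω * h2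
  · rintro rfl w hw
    obtain ⟨a', b', rfl⟩ := mem_blockCode.1 hw
    simp [trInner_word hω]

lemma traceRadical_blockCode :
    traceRadical (blockCode (N := N) (t := t) ω) =
      (Submodule.span F4 (codeRows ω '' {i | (i : ℕ) < N})).restrictScalars F2 := by
  ext v
  simp only [traceRadical, Submodule.mem_inf, Submodule.restrictScalars_mem, mem_blockCode,
    mem_span_image_codeRows_lt]
  constructor
  · rintro ⟨⟨a, b, rfl⟩, hv⟩
    exact ⟨a, by rw [(word_mem_trDualSub_blockCode_iff hω hodd).1 hv]⟩
  · rintro ⟨a, rfl⟩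
    exact ⟨⟨a, 0, rfl⟩, (word_mem_trDualSub_blockCode_iff hω hodd).2 rfl⟩

lemma wt_of_mem_blockCode_of_notMem_traceRadical {v : Fin (4 * N + t) → F4}
    (hv : v ∈ blockCode ω) (hvR : v ∉ traceRadical (blockCode ω)) : wt v = 3 * N + t := by
  obtain ⟨a, b, rfl⟩ := mem_blockCode.1 hv
  have hb : b ≠ 0 := fun hb => hvR ⟨hv, (word_mem_trDualSub_blockCode_iff hω hodd).2 hb⟩
  exact wt_word_of_ne_zero hω a hb

end Radical

variable [NeZero N]

lemma word_eq_zero_iff {a : Fin N → F4} {b : F4} : word (t := t) ω a b = 0 ↔ a = 0 ∧ b = 0 := by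
  constructor
  · intro h
    have ha (i : Fin N) : a i = 0 := by
      simpa [word_blockCoords_inl hω] using congrFun h (blockCoords hω (.inl (i, 0)))
    have hb := congrFun h (blockCoords hω (.inl (0, 1)))
    rw [word_blockCoords_inl hω, ha, zero_add, mul_one] at hb
    exact ⟨funext ha, hb⟩
  · rintro ⟨rfl, rfl⟩
    simp [word]

lemma linearIndependent_codeRows : LinearIndependent F4 (codeRows (N := N) (t := t) ω) := by
  refine Fintype.linearIndependent_iff.2 fun c hc => ?_
  rw [sum_smul_codeRows, word_eq_zero_iff hω] at hc
  exact Fin.lastCases hc.2 (fun i => congrFun hc.1 i)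

lemma finrank_blockCode : Module.finrank F4 (blockCode (N := N) (t := t) ω) = N + 1 := by
  rw [blockCode, finrank_span_eq_card (linearIndependent_codeRows hω), Fintype.card_fin]

lemma natCard_blockCode : Nat.card (blockCode (N := N) (t := t) ω) = 4 ^ (N + 1) := by
  rw [blockCode, natCard_span_of_linearIndependent (linearIndependent_codeRows hω),
    Nat.card_eq_fintype_card, card_F4, Fintype.card_fin]

lemma natCard_span_image_codeRows_lt :
    Nat.card (Submodule.span F4 (codeRows (N := N) (t := t) ω '' {i | (i : ℕ) < N})) = 4 ^ N := by
  have hv : LinearIndependent F4 (blockRow (N := N) (t := t)) := by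
    simpa [codeRows] using
      (linearIndependent_codeRows (t := t) hω).comp _ (Fin.castSucc_injective N)
  rw [image_codeRows_lt, natCard_span_of_linearIndependent hv, Nat.card_eq_fintype_card, card_F4,
    Fintype.card_fin]

lemma wt_codeRows_zero : wt (codeRows (N := N) (t := t) ω 0) = 4 := by
  have h : codeRows (N := N) (t := t) ω 0 = word ω (Pi.single 0 1) 0 := by
    rw [← Fin.castSucc_zero]
    simp [codeRows, word]
  rw [h, wt_word_zero hω]
  simp [Pi.single_apply, filter_eq']

lemma natCard_traceRadical_blockCode (hodd : Odd (N + t)) :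
    Nat.card (traceRadical (blockCode (N := N) (t := t) ω)) = 4 ^ N := by
  rw [traceRadical_blockCode hω hodd]
  exact natCard_span_image_codeRows_lt hω

lemma finrank_traceRadical_blockCode (hodd : Odd (N + t)) :
    Module.finrank F2 (traceRadical (blockCode (N := N) (t := t) ω)) = 2 * N := by
  have h := natCard_traceRadical_blockCode hω hodd
  rw [Module.natCard_eq_pow_finrank (K := F2), Nat.card_zmod,
    show 4 ^ N = 2 ^ (2 * N) by rw [pow_mul]; norm_num] at h
  exact Nat.pow_right_injective le_rfl h

lemma ncard_blockCode_diff_traceRadical (hodd : Odd (N + t)) :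
    ((blockCode (N := N) (t := t) ω : Set (Fin (4 * N + t) → F4)) \
      traceRadical (blockCode (N := N) (t := t) ω)).ncard = 3 * 4 ^ N := by
  have hsub : (traceRadical (blockCode (N := N) (t := t) ω) : Set (Fin (4 * N + t) → F4)) ⊆
      (blockCode (N := N) (t := t) ω : Set (Fin (4 * N + t) → F4)) := fun _ hv => hv.1
  have hC : (blockCode (N := N) (t := t) ω : Set (Fin (4 * N + t) → F4)).ncard = 4 ^ (N + 1) := by
    rw [← Nat.card_coe_set_eq]
    exact natCard_blockCode hω
  have hR : (traceRadical (blockCode (N := N) (t := t) ω) : Set (Fin (4 * N + t) → F4)).ncard =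
      4 ^ N := by
    rw [← Nat.card_coe_set_eq]
    exact natCard_traceRadical_blockCode hω hodd
  have h := Set.ncard_sdiff_add_ncard_of_subset hsub
  rw [hC, hR, pow_succ] at h
  omega

end Code

/-- for `s ≥ 1` and `n = 8s + 4 + 2m`, the `F₄`-linear code `C` spanned by the
`2s + 1` disjoint block rows `rᵢ = (0,…,0,1,1,1,1,0,…,0)` together with the row
`(D, D, …, D, 1, …, 1)` where `D = (0, 1, ω, ω²)` is repeated `2s + 1` times, has
`dim_{F₄} C = 2s + 2` and minimum weight 4, its trace radical `R = C ∩ C^{⊥t}` is the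
`F₄`-span of the first `2s + 1` rows (so `dim_{F₂} R = 4s + 2`), and all `3·4^{2s+1}`
elements of `C \ R` have Hamming weight exactly `n - 2s - 1`. -/
theorem stmt12 (s m n : ℕ) (hs : 1 ≤ s) (hn : n = 8 * s + 4 + 2 * m)
    (ω : F4) (hω : ω ^ 2 + ω + 1 = 0)
    (r : Fin (2 * s + 2) → Fin n → F4)
    (hr : ∀ i : Fin (2 * s + 2), (i : ℕ) < 2 * s + 1 →
      r i = fun j : Fin n => if (j : ℕ) / 4 = (i : ℕ) then 1 else 0)
    (hrlast : ∀ i : Fin (2 * s + 2), (i : ℕ) = 2 * s + 1 →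
      r i = fun j : Fin n => if (j : ℕ) < 8 * s + 4 then
        (if (j : ℕ) % 4 = 0 then 0 else if (j : ℕ) % 4 = 1 then 1 else
         if (j : ℕ) % 4 = 2 then ω else ω ^ 2)
        else 1) :
    let C := Submodule.span F4 (Set.range r)
    let R := C.restrictScalars F2 ⊓ trDualSub (C : Set (Fin n → F4))
    Module.finrank F4 C = 2 * s + 2 ∧
    (∀ v ∈ C, v ≠ 0 → 4 ≤ wt v) ∧ (∃ v ∈ C, v ≠ 0 ∧ wt v = 4) ∧
    R = (Submodule.span F4 (r '' {i | (i : ℕ) < 2 * s + 1})).restrictScalars F2 ∧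
    Module.finrank F2 R = 4 * s + 2 ∧
    (∀ v ∈ C, v ∉ R → wt v = n - 2 * s - 1) ∧
    ((C : Set (Fin n → F4)) \ (R : Set (Fin n → F4))).ncard = 3 * 4 ^ (2 * s + 1) := by
  intro C R
  obtain rfl : n = 4 * (2 * s + 1) + 2 * m := by omega
  obtain rfl : r = codeRows ω := by
    funext i
    refine Fin.lastCases ?_ (fun i => ?_) i
    · rw [hrlast _ rfl]
      funext j
      simp only [codeRows, Fin.snoc_last, lastRow, blockD,
        show 4 * (2 * s + 1) = 8 * s + 4 by ring]
    · rw [hr _ i.isLt, codeRows, Fin.snoc_castSucc]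
      rfl
  have hodd : Odd (2 * s + 1 + 2 * m) := ⟨s + m, by ring⟩
  have hR : R = _ := traceRadical_blockCode hω hodd
  have hwt4 := wt_codeRows_zero (t := 2 * m) (N := 2 * s + 1) hω
  refine ⟨finrank_blockCode hω, fun v hv hv0 => four_le_wt_of_mem_blockCode hω (by omega) hv hv0,
    ⟨codeRows ω 0, Submodule.subset_span ⟨0, rfl⟩, fun h => by simp [h, wt] at hwt4, hwt4⟩,
    hR, ?_, fun v hv hvR => ?_, ncard_blockCode_diff_traceRadical hω hodd⟩
  · exact (finrank_traceRadical_blockCode hω hodd).trans (by ring)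
  · rw [wt_of_mem_blockCode_of_notMem_traceRadical hω hodd hv hvR]
    omega
end
end
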